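/- arXiv:2311.03350 — 3 statements merged into one kernel-verified Lean document; each statement's English description precedes it below -/
import Mathlib

section
/- The function Φ_{w,t}(y) = min({w^T y}, (t/(1-t))(1 - {w^T y})) + max(-w, (t/(1-t)) w)^T y, where {·} denotes fractional part and the max is componentwise, is subadditive: Φ_{w,t}(y1 + y2) ≤ Φ_{w,t}(y1) + Φ_{w,t}(y2) for all y1, y2 ∈ ℝ^m. -/
open Matrix BigOperators

lemma fract_min_subadd (s : ℝ) (hs : 0 ≤ s) (a b : ℝ) :
    min (Int.fract (a + b)) (s * (1 - Int.fract (a + b)))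
      ≤ min (Int.fract a) (s * (1 - Int.fract a))
        + min (Int.fract b) (s * (1 - Int.fract b)) := by
  have hfa0 := Int.fract_nonneg a
  have hfa1 := Int.fract_lt_one a
  have hfb0 := Int.fract_nonneg b
  have hfb1 := Int.fract_lt_one b
  have key : Int.fract (a + b) = Int.fract (Int.fract a + Int.fract b) := by
    have : Int.fract a + Int.fract b = (a + b) - (⌊a⌋ + ⌊b⌋ : ℤ) := by
      unfold Int.fract; push_cast; ring
    rw [this, Int.fract_sub_intCast]
  by_cases h : Int.fract a + Int.fract b < 1
  · have : Int.fract (a + b) = Int.fract a + Int.fract b := by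
      rw [key, Int.fract_eq_self.mpr ⟨by linarith, h⟩]
    rw [this]
    rcases min_cases (Int.fract a) (s * (1 - Int.fract a)) with ⟨h1, _⟩ | ⟨h1, _⟩ <;>
      rcases min_cases (Int.fract b) (s * (1 - Int.fract b)) with ⟨h2, _⟩ | ⟨h2, _⟩ <;>
      rw [h1, h2]
    · exact le_trans (min_le_left _ _) (le_refl _)
    · refine le_trans (min_le_right _ _) ?_
      nlinarith
    · refine le_trans (min_le_right _ _) ?_
      nlinarith
    · refine le_trans (min_le_right _ _) ?_
      nlinarith
  · push_neg at h
    have : Int.fract (a + b) = Int.fract a + Int.fract b - 1 := by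
      rw [key]
      have : Int.fract a + Int.fract b - 1 = Int.fract a + Int.fract b - (1:ℤ) := by
        push_cast; ring
      rw [show Int.fract (Int.fract a + Int.fract b)
          = Int.fract (Int.fract a + Int.fract b - (1:ℤ)) from (Int.fract_sub_intCast _ _).symm,
        Int.fract_eq_self.mpr ⟨by linarith, by linarith⟩]
      push_cast; ring
    rw [this]
    rcases min_cases (Int.fract a) (s * (1 - Int.fract a)) with ⟨h1, _⟩ | ⟨h1, _⟩ <;>
      rcases min_cases (Int.fract b) (s * (1 - Int.fract b)) with ⟨h2, _⟩ | ⟨h2, _⟩ <;>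
      rw [h1, h2]
    · refine le_trans (min_le_left _ _) ?_; linarith
    · refine le_trans (min_le_left _ _) ?_; nlinarith
    · refine le_trans (min_le_left _ _) ?_; nlinarith
    · refine le_trans (min_le_right _ _) ?_; nlinarith

/-- The subadditive function Φ_{w,t} of Chételat–Lodi, with `t/(1-t)` as stated
(interpreted as `0` when `t = 0` since then `t/(1-t) = 0`). -/
noncomputable def Phi {m : ℕ} (w : Fin m → ℝ) (t : ℝ) (y : Fin m → ℝ) : ℝ :=
  min (Int.fract (w ⬝ᵥ y)) ((t / (1 - t)) * (1 - Int.fract (w ⬝ᵥ y)))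
    + (fun i => max (-(w i)) ((t / (1 - t)) * w i)) ⬝ᵥ y

theorem phi_subadditive {m : ℕ} (w : Fin m → ℝ) (t : ℝ) (ht0 : 0 ≤ t) (ht1 : t < 1)
    (y1 y2 : Fin m → ℝ) :
    Phi w t (y1 + y2) ≤ Phi w t y1 + Phi w t y2 := by
  have hs : 0 ≤ t / (1 - t) := div_nonneg ht0 (by linarith)
  unfold Phi
  have hw : w ⬝ᵥ (y1 + y2) = w ⬝ᵥ y1 + w ⬝ᵥ y2 := dotProduct_add w y1 y2
  have hv : (fun i => max (-(w i)) ((t / (1 - t)) * w i)) ⬝ᵥ (y1 + y2)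
      = (fun i => max (-(w i)) ((t / (1 - t)) * w i)) ⬝ᵥ y1
        + (fun i => max (-(w i)) ((t / (1 - t)) * w i)) ⬝ᵥ y2 := dotProduct_add _ y1 y2
  rw [hw, hv]
  have := fract_min_subadd (t / (1 - t)) hs (w ⬝ᵥ y1) (w ⬝ᵥ y2)
  linarith
end

section
/- For any w ∈ ℝ^m and t ∈ [0,1), the inequality Φ_{w,t}(-A)·x ≥ Φ_{w,t}(-b), where Φ_{w,t}(-A)·x denotes Σ_j Φ_{w,t}(-A_j) x_j, is valid for every nonnegative integer point x ∈ ℤ^n_{≥0} satisfying A x ≤ b. -/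
open Matrix BigOperators

lemma gmi_subadd (s a b : ℝ) (hs : 0 ≤ s) :
    min (Int.fract (a + b)) (s * (1 - Int.fract (a + b)))
      ≤ min (Int.fract a) (s * (1 - Int.fract a))
        + min (Int.fract b) (s * (1 - Int.fract b)) := by
  obtain ⟨z, hz⟩ := Int.fract_add a b
  have hα := Int.fract_nonneg a; have hα1 := Int.fract_lt_one a
  have hβ := Int.fract_nonneg b; have hβ1 := Int.fract_lt_one b
  have hu := Int.fract_nonneg (a + b); have hu1 := Int.fract_lt_one (a + b)
  have hz' : z = 0 ∨ z = -1 := by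
    have h1 : (z : ℝ) < 1 := by linarith
    have h2 : (-2 : ℝ) < z := by linarith
    have h1' : z < 1 := by exact_mod_cast h1
    have h2' : -2 < z := by exact_mod_cast h2
    omega
  have hsα : 0 ≤ s * Int.fract a := mul_nonneg hs hα
  have hsβ : 0 ≤ s * Int.fract b := mul_nonneg hs hβ
  have hsα1 : 0 ≤ s * (1 - Int.fract a) := mul_nonneg hs (by linarith)
  have hsβ1 : 0 ≤ s * (1 - Int.fract b) := mul_nonneg hs (by linarith)
  rcases hz' with rfl | rfl <;>
  · rcases min_cases (Int.fract a) (s * (1 - Int.fract a)) with ⟨h1, _⟩ | ⟨h1, _⟩ <;>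
    rcases min_cases (Int.fract b) (s * (1 - Int.fract b)) with ⟨h3, _⟩ | ⟨h3, _⟩ <;>
    rw [h1, h3] <;>
    first
      | (refine le_trans (min_le_left _ _) ?_; push_cast at hz; nlinarith)
      | (refine le_trans (min_le_right _ _) ?_; push_cast at hz; nlinarith)

lemma Phi_zero {m : ℕ} (w : Fin m → ℝ) (t : ℝ) (hs : 0 ≤ t / (1 - t)) :
    Phi w t 0 = 0 := by
  simp [Phi, min_eq_left hs]

lemma Phi_subadd {m : ℕ} (w : Fin m → ℝ) (t : ℝ) (hs : 0 ≤ t / (1 - t))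
    (y z : Fin m → ℝ) : Phi w t (y + z) ≤ Phi w t y + Phi w t z := by
  unfold Phi
  rw [dotProduct_add, dotProduct_add]
  have := gmi_subadd (t / (1 - t)) (w ⬝ᵥ y) (w ⬝ᵥ z) hs
  linarith

lemma Phi_nsmul {m : ℕ} (w : Fin m → ℝ) (t : ℝ) (hs : 0 ≤ t / (1 - t))
    (k : ℕ) (y : Fin m → ℝ) :
    Phi w t (fun i => (k : ℝ) * y i) ≤ (k : ℝ) * Phi w t y := by
  induction k with
  | zero =>
    have h : (fun i => ((0 : ℕ) : ℝ) * y i) = (0 : Fin m → ℝ) := by funext i; simp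
    rw [h, Phi_zero w t hs]; simp
  | succ k ih =>
    have h : (fun i => ((k + 1 : ℕ) : ℝ) * y i)
        = y + (fun i => (k : ℝ) * y i) := by
      funext i; push_cast; simp [Pi.add_apply]; ring
    rw [h]
    calc Phi w t (y + fun i => (k : ℝ) * y i)
        ≤ Phi w t y + Phi w t (fun i => (k : ℝ) * y i) := Phi_subadd w t hs _ _
      _ ≤ Phi w t y + (k : ℝ) * Phi w t y := by linarith
      _ = ((k + 1 : ℕ) : ℝ) * Phi w t y := by push_cast; ring

lemma Phi_sum {m n : ℕ} (w : Fin m → ℝ) (t : ℝ) (hs : 0 ≤ t / (1 - t))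
    (S : Finset (Fin n)) (k : Fin n → ℕ) (y : Fin n → Fin m → ℝ) :
    Phi w t (fun i => ∑ j ∈ S, (k j : ℝ) * y j i)
      ≤ ∑ j ∈ S, (k j : ℝ) * Phi w t (y j) := by
  induction S using Finset.induction with
  | empty =>
    have h : (fun i => ∑ j ∈ (∅ : Finset (Fin n)), (k j : ℝ) * y j i)
        = (0 : Fin m → ℝ) := by funext i; simp
    rw [h, Phi_zero w t hs]; simp
  | @insert a S ha ih =>
    have h : (fun i => ∑ j ∈ insert a S, (k j : ℝ) * y j i)
        = (fun i => (k a : ℝ) * y a i) + (fun i => ∑ j ∈ S, (k j : ℝ) * y j i) := by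
      funext i; simp [Finset.sum_insert ha]
    rw [h, Finset.sum_insert ha]
    calc _ ≤ Phi w t (fun i => (k a : ℝ) * y a i)
            + Phi w t (fun i => ∑ j ∈ S, (k j : ℝ) * y j i) := Phi_subadd w t hs _ _
      _ ≤ (k a : ℝ) * Phi w t (y a) + ∑ j ∈ S, (k j : ℝ) * Phi w t (y j) := by
          have := Phi_nsmul w t hs (k a) (y a); linarith

lemma Phi_nonpos {m : ℕ} (w : Fin m → ℝ) (t : ℝ) (hs : 0 ≤ t / (1 - t))
    (e : Fin m → ℝ) (he : ∀ i, e i ≤ 0) : Phi w t e ≤ 0 := by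
  set s := t / (1 - t) with hsdef
  set r := w ⬝ᵥ e with hr
  have hL1 : (fun i => max (-(w i)) (s * w i)) ⬝ᵥ e ≤ -r := by
    have : ∀ i ∈ Finset.univ, max (-(w i)) (s * w i) * e i ≤ (-(w i)) * e i := by
      intro i _
      exact mul_le_mul_of_nonpos_right (le_max_left _ _) (he i)
    calc (fun i => max (-(w i)) (s * w i)) ⬝ᵥ e
        ≤ ∑ i, (-(w i)) * e i := Finset.sum_le_sum this
      _ = -r := by simp [hr, dotProduct, Finset.sum_neg_distrib]
  have hL2 : (fun i => max (-(w i)) (s * w i)) ⬝ᵥ e ≤ s * r := by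
    have : ∀ i ∈ Finset.univ, max (-(w i)) (s * w i) * e i ≤ (s * w i) * e i := by
      intro i _
      exact mul_le_mul_of_nonpos_right (le_max_right _ _) (he i)
    calc (fun i => max (-(w i)) (s * w i)) ⬝ᵥ e
        ≤ ∑ i, (s * w i) * e i := Finset.sum_le_sum this
      _ = s * r := by rw [hr, dotProduct, Finset.mul_sum]; congr 1; funext i; ring
  have hfr := Int.fract_nonneg r
  have hfr1 := Int.fract_lt_one r
  rcases le_or_gt 0 r with hr0 | hr0
  · have hfl : (0 : ℝ) ≤ ⌊r⌋ := by exact_mod_cast Int.floor_nonneg.mpr hr0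
    have h1 : Int.fract r ≤ r := by rw [Int.fract]; linarith
    unfold Phi
    calc min (Int.fract r) (s * (1 - Int.fract r)) + _
        ≤ Int.fract r + -r := add_le_add (min_le_left _ _) hL1
      _ ≤ 0 := by linarith
  · have hfl : ⌊r⌋ < 0 := Int.floor_lt.mpr (by exact_mod_cast hr0)
    have hfl2 : ⌊r⌋ ≤ -1 := by omega
    have hfl' : (⌊r⌋ : ℝ) ≤ -1 := by exact_mod_cast hfl2
    have h1 : 1 - Int.fract r ≤ -r := by rw [Int.fract]; linarith
    have h2 : s * (1 - Int.fract r) ≤ s * (-r) := mul_le_mul_of_nonneg_left h1 hs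
    unfold Phi
    calc min (Int.fract r) (s * (1 - Int.fract r)) + _
        ≤ s * (1 - Int.fract r) + s * r := add_le_add (min_le_right _ _) hL2
      _ ≤ 0 := by nlinarith

theorem subadditive_inequality_valid {m n : ℕ} (A : Matrix (Fin m) (Fin n) ℝ) (b : Fin m → ℝ)
    (w : Fin m → ℝ) (t : ℝ) (ht0 : 0 ≤ t) (ht1 : t < 1)
    (x : Fin n → ℝ) (hx0 : ∀ j, 0 ≤ x j) (hxint : ∀ j, ∃ z : ℤ, x j = (z : ℝ))
    (hAx : ∀ i, A.mulVec x i ≤ b i) :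
    ∑ j, Phi w t (fun i => -A i j) * x j ≥ Phi w t (fun i => -b i) := by
  have hs : 0 ≤ t / (1 - t) := div_nonneg ht0 (by linarith)
  have hk : ∀ j, ∃ kj : ℕ, x j = (kj : ℝ) := by
    intro j
    obtain ⟨z, hz⟩ := hxint j
    have hz0 : 0 ≤ z := by
      have := hx0 j; rw [hz] at this; exact_mod_cast this
    exact ⟨z.toNat, by rw [hz]; exact_mod_cast (Int.toNat_of_nonneg hz0).symm⟩
  choose k hkx using hk
  have hdecomp : (fun i => -b i)
      = (fun i => -(A.mulVec x i)) + (fun i => A.mulVec x i - b i) := by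
    funext i; simp only [Pi.add_apply]; ring
  have h1 : Phi w t (fun i => -b i)
      ≤ Phi w t (fun i => -(A.mulVec x i)) + Phi w t (fun i => A.mulVec x i - b i) := by
    rw [hdecomp]; exact Phi_subadd w t hs _ _
  have h2 : Phi w t (fun i => A.mulVec x i - b i) ≤ 0 :=
    Phi_nonpos w t hs _ (fun i => by linarith [hAx i])
  have hmv : (fun i => -(A.mulVec x i))
      = (fun i => ∑ j, (k j : ℝ) * (fun i' => -A i' j) i) := by
    funext i
    simp only [Matrix.mulVec, dotProduct]
    rw [← Finset.sum_neg_distrib]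
    congr 1; funext j; rw [← hkx j]; ring
  have h3 : Phi w t (fun i => -(A.mulVec x i))
      ≤ ∑ j, (k j : ℝ) * Phi w t (fun i => -A i j) := by
    rw [hmv]; exact Phi_sum w t hs Finset.univ k _
  have h4 : ∑ j, (k j : ℝ) * Phi w t (fun i => -A i j)
      = ∑ j, Phi w t (fun i => -A i j) * x j := by
    congr 1; funext j; rw [hkx j]; ring
  linarith
end

section
/- Suppose (g, h, u, v) is feasible for the cut-generating program CGP at a point x̄ ∈ X̃ (the LP relaxation feasible set) with objective value g^T x̄ − h > 0. Then x̄ violates the inequality g^T x ≤ h while every point of conv(X) satisfies it; in particular x̄ ∉ conv(X), where X = {x ≥ 0 : Ax ≤ b, x ∈ ℤ^n} and the disjunction (π, η) has π ∈ ℤ^n, η ∈ ℤ. -/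
open Matrix BigOperators

lemma cgp_aux {m n : ℕ} (A : Matrix (Fin m) (Fin n) ℝ) (b : Fin m → ℝ)
    (c : Fin n → ℝ) (t : ℝ) (g : Fin n → ℝ) (h : ℝ)
    (w : Fin m → ℝ) (w0 : ℝ) (hw : ∀ i, 0 ≤ w i) (hw0 : 0 ≤ w0)
    (hg : ∀ j, g j ≤ (fun i => A i j) ⬝ᵥ w + c j * w0)
    (hh : b ⬝ᵥ w + t * w0 ≤ h)
    (x : Fin n → ℝ) (hx1 : ∀ i, A.mulVec x i ≤ b i) (hx2 : ∀ j, 0 ≤ x j)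
    (hct : c ⬝ᵥ x ≤ t) : g ⬝ᵥ x ≤ h := by
  have h1 : g ⬝ᵥ x ≤ (fun j => (fun i => A i j) ⬝ᵥ w + c j * w0) ⬝ᵥ x :=
    Finset.sum_le_sum fun j _ => mul_le_mul_of_nonneg_right (hg j) (hx2 j)
  have h2 : (fun j => (fun i => A i j) ⬝ᵥ w + c j * w0) ⬝ᵥ x
      = w ⬝ᵥ (A *ᵥ x) + w0 * (c ⬝ᵥ x) := by
    simp only [dotProduct, Matrix.mulVec, add_mul, Finset.sum_add_distrib,
      Finset.sum_mul, Finset.mul_sum]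
    rw [Finset.sum_comm]
    congr 1
    · exact Finset.sum_congr rfl fun i _ => Finset.sum_congr rfl fun j _ => by ring
    · exact Finset.sum_congr rfl fun j _ => by ring
  have h3 : w ⬝ᵥ (A *ᵥ x) ≤ b ⬝ᵥ w := by
    rw [dotProduct_comm b w]
    exact Finset.sum_le_sum fun i _ => mul_le_mul_of_nonneg_left (hx1 i) (hw i)
  have h4 : w0 * (c ⬝ᵥ x) ≤ t * w0 := by
    rw [mul_comm t w0]
    exact mul_le_mul_of_nonneg_left hct hw0
  calc g ⬝ᵥ x ≤ w ⬝ᵥ (A *ᵥ x) + w0 * (c ⬝ᵥ x) := h1.trans_eq h2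
    _ ≤ b ⬝ᵥ w + t * w0 := add_le_add h3 h4
    _ ≤ h := hh

theorem cgp_positive_objective_separates {m n : ℕ}
    (A : Matrix (Fin m) (Fin n) ℝ) (b : Fin m → ℝ)
    (π : Fin n → ℤ) (η : ℤ) (g : Fin n → ℝ) (h : ℝ)
    (u : Fin m → ℝ) (u0 : ℝ) (v : Fin m → ℝ) (v0 : ℝ)
    (hu : ∀ i, 0 ≤ u i) (hu0 : 0 ≤ u0) (hv : ∀ i, 0 ≤ v i) (hv0 : 0 ≤ v0)
    (hg1 : ∀ j, g j ≤ (fun i => A i j) ⬝ᵥ u + (π j : ℝ) * u0)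
    (hg2 : ∀ j, g j ≤ (fun i => A i j) ⬝ᵥ v - (π j : ℝ) * v0)
    (hh1 : h ≥ b ⬝ᵥ u + (η : ℝ) * u0)
    (hh2 : h ≥ b ⬝ᵥ v - ((η : ℝ) + 1) * v0)
    (xbar : Fin n → ℝ)
    (hxbar : (∀ i, A.mulVec xbar i ≤ b i) ∧ (∀ j, 0 ≤ xbar j))
    (hobj : g ⬝ᵥ xbar - h > 0) :
    (∀ x ∈ convexHull ℝ {x : Fin n → ℝ | (∀ i, A.mulVec x i ≤ b i) ∧ (∀ j, 0 ≤ x j) ∧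
        (∀ j, ∃ z : ℤ, x j = (z : ℝ))}, g ⬝ᵥ x ≤ h) ∧
    h < g ⬝ᵥ xbar ∧
    xbar ∉ convexHull ℝ {x : Fin n → ℝ | (∀ i, A.mulVec x i ≤ b i) ∧ (∀ j, 0 ≤ x j) ∧
        (∀ j, ∃ z : ℤ, x j = (z : ℝ))} := by
  set S : Set (Fin n → ℝ) := {x : Fin n → ℝ | (∀ i, A.mulVec x i ≤ b i) ∧ (∀ j, 0 ≤ x j) ∧
        (∀ j, ∃ z : ℤ, x j = (z : ℝ))} with hS
  -- every integer-feasible point satisfies the cut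
  have hcut : ∀ x ∈ S, g ⬝ᵥ x ≤ h := by
    rintro x ⟨hx1, hx2, hx3⟩
    choose z hz using hx3
    have hπx : (fun j => (π j : ℝ)) ⬝ᵥ x = ((∑ j, π j * z j : ℤ) : ℝ) := by
      simp only [dotProduct]
      push_cast
      exact Finset.sum_congr rfl fun j _ => by rw [hz j]
    rcases le_or_gt (∑ j, π j * z j) η with hle | hlt
    · exact cgp_aux A b (fun j => (π j : ℝ)) (η : ℝ) g h u u0 hu hu0 hg1 hh1 x hx1 hx2
        (by rw [hπx]; exact_mod_cast hle)
    · refine cgp_aux A b (fun j => -(π j : ℝ)) (-((η : ℝ) + 1)) g h v v0 hv hv0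
        (fun j => by simpa [sub_eq_add_neg, neg_mul] using hg2 j)
        (by rw [neg_mul]; linarith) x hx1 hx2 ?_
      have : (η : ℝ) + 1 ≤ (fun j => (π j : ℝ)) ⬝ᵥ x := by
        rw [hπx]; exact_mod_cast hlt
      have hneg : (fun j => -(π j : ℝ)) ⬝ᵥ x = -((fun j => (π j : ℝ)) ⬝ᵥ x) := by
        simp [dotProduct]
      rw [hneg]
      linarith
  -- the halfspace is convex, hence contains the hull
  have hconv : Convex ℝ {x : Fin n → ℝ | g ⬝ᵥ x ≤ h} := by
    apply convex_halfSpace_le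
    exact { map_add := fun x y => by simp [dotProduct, mul_add, Finset.sum_add_distrib],
            map_smul := fun c x => by
              simp [dotProduct, Finset.mul_sum, mul_comm, mul_left_comm] }
  have hhull : ∀ x ∈ convexHull ℝ S, g ⬝ᵥ x ≤ h := fun x hx =>
    convexHull_min hcut hconv hx
  refine ⟨hhull, by linarith, fun hmem => ?_⟩
  have := hhull xbar hmem
  linarith
end
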